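/- Let K be a graded Hopf algebra over a commutative ring k and let P = Ker(Δ̄) denote its primitive elements. Then the canonical map K ⊗ TC(sP) ⊗ K → B(K;K;K) is a morphism of graded coalgebras, where the left-hand side carries the coalgebra structure obtained by tensorization. -/

import Mathlib

/-!
STATEMENT 9.  Let `K` be a graded Hopf algebra over `k`, with primitives
`P = Ker Δ̄`.  The canonical map `K ⊗ TC(sP) ⊗ K → B(K;K;K)` is a morphism of
graded coalgebras, where the left-hand side carries the coalgebra structure
obtained by tensorization (diagonal of `K` on the outer factors,
deconcatenation on `TC(sP)`, with Koszul signs), and the bar resolution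
carries the Alexander–Whitney diagonal `AW ∘ B(Δ;Δ;Δ)` (with the ζ-signs).

We model `K` as the free module on a pointed graded basis `S` (with unit
basis element `e`, `deg e = 0`, counit `ε(single s) = δ_{s,e}`), with product
and coproduct structure constants `mul`, `diag`.  The bar resolution is the
free module on generators `(a, [s₁|…|s_r], b)`, `a, b ∈ S`, `sᵢ ∈ S \ {e}`
(a basis of `K̄`).  Primitive elements are those `x` with
`Δx = x ⊗ 1 + 1 ⊗ x`.
-/

def sgn (m : ℤ) : ℤ := if Even m then 1 else -1

variable (k : Type*) [CommRing k] {S : Type*} [DecidableEq S]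
  (deg : S → ℤ) (e : S) (mul : S → S → (S →₀ k)) (diag : S → ((S × S) →₀ k))

/-- Product of two elements of `K`. -/
noncomputable def mulK (f g : S →₀ k) : S →₀ k :=
  f.sum fun s c => g.sum fun t c' => (c * c') • mul s t

/-- Product of a list of basis elements. -/
noncomputable def listProdK : List S → (S →₀ k)
  | [] => Finsupp.single e 1
  | s :: l => mulK k mul (Finsupp.single s 1) (listProdK l)

/-- `x ⊗ y ∈ K ⊗ K`. -/
noncomputable def pairT (f g : S →₀ k) : (S × S) →₀ k :=
  f.sum fun s c => g.sum fun t c' => (c * c') • Finsupp.single (s, t) 1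

/-- The coproduct of `K`. -/
noncomputable def diagK (f : S →₀ k) : (S × S) →₀ k := f.sum fun s c => c • diag s

/-- `x` is primitive: `Δx = x ⊗ 1 + 1 ⊗ x`. -/
def IsPrimitive (x : S →₀ k) : Prop :=
  diagK k diag x = pairT k x (Finsupp.single e 1) + pairT k (Finsupp.single e 1) x

/-- `x` is homogeneous of degree `d`. -/
def IsHomog (d : ℤ) (x : S →₀ k) : Prop := ∀ s ∈ x.support, deg s = d

/-- Basis of `K̄ = ker ε`. -/
abbrev SBar (e : S) := {s : S // s ≠ e}

/-- Basis of the bar resolution `K ⊗ T(sK̄) ⊗ K`. -/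
abbrev BarGen (e : S) := S × List (SBar e) × S

/-- Turn a list of non-unit basis elements into middle slots. -/
def toBarL (l : List S) : List (SBar e) :=
  l.filterMap fun s => if h : s = e then none else some ⟨s, h⟩

/-- Expand a list of elements of `K` into a combination of basis lists. -/
noncomputable def expandL : List (S →₀ k) → (List S →₀ k)
  | [] => Finsupp.single [] 1
  | f :: L => f.sum fun s c => c • (expandL L).mapDomain (s :: ·)

/-- The canonical map `K ⊗ TC(sP) ⊗ K → B(K;K;K)` on a generator
`a ⊗ [p₁|…|pₙ] ⊗ b` (the `pᵢ` will be primitive, hence supported away from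
the unit). -/
noncomputable def jMap (a : S) (ps : List (S →₀ k)) (b : S) : BarGen e →₀ k :=
  (expandL k ps).sum fun l c =>
    if ∀ s ∈ l, s ≠ e then c • Finsupp.single (a, toBarL e l, b) 1 else 0

/-- Choose a component of the coproduct in every middle slot. -/
noncomputable def chooseAll : List (SBar e) → (List (S × S) →₀ k)
  | [] => Finsupp.single [] 1
  | s :: L => (diag s.1).sum fun p c => c • (chooseAll L).mapDomain (p :: ·)

/-- The ζ-sign of the Alexander–Whitney diagonal of the bar resolution. -/
def zeta (q m : ℤ) (adegs bdegs : List ℤ) (i : ℕ) : ℤ :=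
  let r := adegs.length
  (∑ j ∈ Finset.range r, (q + ((bdegs.take j).sum)) * adegs.getD j 0)
  + (q + bdegs.sum) * m
  + (∑ j ∈ Finset.range r, if i ≤ j then (j + 1 - i : ℤ) * adegs.getD j 0 else 0)
  + (r - i : ℤ) * m + (i : ℤ) * q
  + (∑ j ∈ Finset.range r, if j + 1 < i then ((i : ℤ) - (j + 1)) * bdegs.getD j 0 else 0)

/-- The Alexander–Whitney diagonal `AW ∘ B(Δ;Δ;Δ)` of the bar resolution, on
a generator. -/
noncomputable def diagBar (g : BarGen e) : (BarGen e × BarGen e) →₀ k :=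
  match g with
  | (a, L, b) =>
    (diag a).sum fun pa ca =>
    (diag b).sum fun pb cb =>
    (chooseAll k e diag L).sum fun cl cc =>
      ∑ i ∈ Finset.range (L.length + 1),
        (if (∀ s ∈ (cl.take i).map Prod.fst, s ≠ e) ∧
            (∀ s ∈ (cl.drop i).map Prod.snd, s ≠ e) then
          (sgn (zeta (deg pa.2) (deg pb.1) (cl.map fun p => deg p.1)
              (cl.map fun p => deg p.2) i) * (ca * cb * cc)) •
            ((mulK k mul (listProdK k e mul ((cl.drop i).map Prod.fst))
                (Finsupp.single pb.1 1)).sum fun sL cL =>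
              (mulK k mul (Finsupp.single pa.2 1)
                  (listProdK k e mul ((cl.take i).map Prod.snd))).sum fun sR cR =>
                (cL * cR) •
                  Finsupp.single ((pa.1, toBarL e ((cl.take i).map Prod.fst), sL),
                    (sR, toBarL e ((cl.drop i).map Prod.snd), pb.2)) 1)
        else 0)

/-- `(j ⊗ j)` of an exterior tensor of two combinations of bar generators. -/
noncomputable def pairBar (f g : BarGen e →₀ k) : (BarGen e × BarGen e) →₀ k :=
  f.sum fun u c => g.sum fun v c' => (c * c') • Finsupp.single (u, v) 1

/-- The tensorized diagonal of `K ⊗ TC(sP) ⊗ K` followed by `j ⊗ j`, on a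
generator `a ⊗ [p₁|…|pₙ] ⊗ b` whose middle entries have degrees `ds`. -/
noncomputable def diagTens (a : S) (ps : List (ℤ × (S →₀ k))) (b : S) :
    (BarGen e × BarGen e) →₀ k :=
  (diag a).sum fun pa ca =>
  (diag b).sum fun pb cb =>
    ∑ i ∈ Finset.range (ps.length + 1),
      (sgn (deg pa.2 * ((ps.take i).map fun p => p.1 + 1).sum
          + (((ps.drop i).map fun p => p.1 + 1).sum) * deg pb.1
          + deg pa.2 * deg pb.1) * (ca * cb)) •
        pairBar k e (jMap k e (pa.1 : S) ((ps.take i).map Prod.snd) pb.1)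
          (jMap k e pa.2 ((ps.drop i).map Prod.snd) pb.2)

/-!
Expand both sides over basis elements. On `a ⊗ [p₁|…|pₙ] ⊗ b` the Alexander–Whitney diagonal
sums over coproduct factors of `a`, of `b` and of every `pⱼ`, and over a cut `i`. As each `pⱼ` is
primitive, its coproduct is `pⱼ ⊗ 1 + 1 ⊗ pⱼ`, and a unit in a bar slot kills the summand, so only
the choice `pⱼ ⊗ 1` for `j ≤ i` and `1 ⊗ pⱼ` for `j > i` survives. For it the products of the
remaining legs collapse to `1`, leaving `(a' ⊗ [p₁|…|pᵢ] ⊗ b') ⊗ (a'' ⊗ [pᵢ₊₁|…|pₙ] ⊗ b'')`, and the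
ζ-sign, whose degree lists are now padded with zeros, reduces to the Koszul sign of the
tensorized diagonal.
-/

open Finsupp

section LinearCombination

variable {R α β M : Type*} [CommSemiring R] [AddCommMonoid M] [Module R M]

theorem Finsupp.linearCombination_congr_of_mem_support {F : α →₀ R} {Φ Ψ : α → M}
    (h : ∀ x ∈ F.support, Φ x = Ψ x) :
    linearCombination R Φ F = linearCombination R Ψ F := by
  simp only [linearCombination_apply]
  exact Finsupp.sum_congr fun x hx => by rw [h x hx]

theorem Finsupp.linearCombination_comm (F : α →₀ R) (G : β →₀ R) (Φ : α → β → M) :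
    linearCombination R (fun x => linearCombination R (Φ x) G) F =
      linearCombination R (fun y => linearCombination R (fun x => Φ x y) F) G := by
  simp only [linearCombination_apply, Finsupp.smul_sum]
  rw [Finsupp.sum_comm]
  exact Finsupp.sum_congr fun _ _ => Finsupp.sum_congr fun _ _ => smul_comm _ _ _

theorem Finsupp.linearCombination_smul_left (c : R) (F : α →₀ R) (Φ : α → M) :
    linearCombination R (fun x => c • Φ x) F = c • linearCombination R Φ F := by
  simp only [linearCombination_apply, Finsupp.smul_sum]
  exact Finsupp.sum_congr fun _ _ => smul_comm _ _ _

theorem Finsupp.linearCombination_finset_sum {ι : Type*} (s : Finset ι) (F : α →₀ R)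
    (Φ : ι → α → M) :
    linearCombination R (fun x => ∑ i ∈ s, Φ i x) F = ∑ i ∈ s, linearCombination R (Φ i) F := by
  simp only [linearCombination_apply, Finset.smul_sum]
  exact Finset.sum_comm

theorem Finsupp.linearCombination_eq_zero_of_forall {F : α →₀ R} {Φ : α → M}
    (h : ∀ x, Φ x = 0) : linearCombination R Φ F = 0 := by
  simp [linearCombination_apply, h]

end LinearCombination

section HopfStructure

variable {R T : Type*} [CommRing R]

theorem mulK_single_single (mul : T → T → (T →₀ R)) (s t : T) :
    mulK R mul (single s 1) (single t 1) = mul s t := by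
  simp [mulK]

theorem listProdK_replicate (e : T) (mul : T → T → (T →₀ R))
    (hunitl : ∀ s, mul e s = single s 1) (n : ℕ) :
    listProdK R e mul (List.replicate n e) = single e 1 := by
  induction n with
  | zero => rfl
  | succ n ih => rw [List.replicate_succ, listProdK, ih, mulK_single_single, hunitl]

theorem pairT_single_right (x : T →₀ R) (t : T) :
    pairT R x (single t 1) = x.mapDomain (·, t) := by
  refine Finsupp.sum_congr fun s _ => ?_
  rw [sum_single_index (by simp), smul_single, smul_eq_mul, mul_one, mul_one]

theorem pairT_single_left (s : T) (x : T →₀ R) :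
    pairT R (single s 1) x = x.mapDomain (s, ·) := by
  rw [pairT, sum_single_index (by simp)]
  refine Finsupp.sum_congr fun t _ => ?_
  rw [smul_single, smul_eq_mul, one_mul, mul_one]

theorem isPrimitive_iff (e : T) (diag : T → ((T × T) →₀ R)) (x : T →₀ R) :
    IsPrimitive R e diag x ↔
      linearCombination R diag x = x.mapDomain (·, e) + x.mapDomain (e, ·) := by
  rw [IsPrimitive, diagK, pairT_single_right, pairT_single_left, linearCombination_apply]

end HopfStructure

section Expansion

variable {R T M : Type*} [CommRing R] [AddCommMonoid M] [Module R M]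

theorem linearCombination_expandL_nil (Φ : List T → M) :
    linearCombination R Φ (expandL R []) = Φ [] := by
  rw [expandL, linearCombination_single, one_smul]

theorem linearCombination_expandL_cons (p : T →₀ R) (ps : List (T →₀ R)) (Φ : List T → M) :
    linearCombination R Φ (expandL R (p :: ps)) =
      linearCombination R (fun s => linearCombination R (fun l => Φ (s :: l)) (expandL R ps)) p := by
  rw [expandL, ← linearCombination_apply, linearCombination_linearCombination]
  simp only [linearCombination_mapDomain, Function.comp_def]

theorem linearCombination_expandL_congr {ps : List (T →₀ R)} {Φ Ψ : List T → M}
    (h : ∀ l, List.Forall₂ (fun p s => s ∈ p.support) ps l → Φ l = Ψ l) :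
    linearCombination R Φ (expandL R ps) = linearCombination R Ψ (expandL R ps) := by
  induction ps generalizing Φ Ψ with
  | nil => simp only [linearCombination_expandL_nil, h [] .nil]
  | cons p ps ih =>
    simp only [linearCombination_expandL_cons]
    exact linearCombination_congr_of_mem_support fun s hs =>
      ih fun l hl => h (s :: l) (.cons hs hl)

theorem linearCombination_chooseAll_nil (e : T) (diag : T → ((T × T) →₀ R))
    (Φ : List (T × T) → M) :
    linearCombination R Φ (chooseAll R e diag []) = Φ [] := by
  rw [chooseAll, linearCombination_single, one_smul]

theorem linearCombination_chooseAll_cons (e : T) (diag : T → ((T × T) →₀ R)) (x : SBar e)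
    (L : List (SBar e)) (Φ : List (T × T) → M) :
    linearCombination R Φ (chooseAll R e diag (x :: L)) =
      linearCombination R (fun pr => linearCombination R (fun cl => Φ (pr :: cl))
        (chooseAll R e diag L)) (diag x.1) := by
  rw [chooseAll, ← linearCombination_apply, linearCombination_linearCombination]
  simp only [linearCombination_mapDomain, Function.comp_def]

theorem forall_ne_of_forall₂_mem_support {e : T} {ps : List (T →₀ R)} {l : List T}
    (hps : ∀ p ∈ ps, p e = 0) (hl : List.Forall₂ (fun p s => s ∈ p.support) ps l) :
    ∀ s ∈ l, s ≠ e := by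
  induction hl with
  | nil => simp
  | cons hs _ ih =>
    simp only [List.forall_mem_cons] at hps ⊢
    exact ⟨fun h => mem_support_iff.mp hs (h ▸ hps.1), ih hps.2⟩

theorem map_deg_eq_of_forall₂_mem_support (deg : T → ℤ) {qs : List (ℤ × (T →₀ R))}
    {l : List T} (hqs : ∀ q ∈ qs, IsHomog R deg q.1 q.2)
    (hl : List.Forall₂ (fun p s => s ∈ p.support) (qs.map Prod.snd) l) :
    l.map deg = qs.map Prod.fst := by
  induction qs generalizing l with
  | nil => cases hl; rfl
  | cons q qs ih =>
    obtain _ | ⟨hs, hl⟩ := hl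
    simp only [List.forall_mem_cons] at hqs
    rw [List.map_cons, List.map_cons, hqs.1 _ hs, ih hqs.2 hl]

end Expansion

theorem List.sum_range_length_getD (l : List ℤ) :
    ∑ j ∈ Finset.range l.length, l.getD j 0 = l.sum := by
  induction l with
  | nil => simp
  | cons x l ih => rw [List.length_cons, Finset.sum_range_succ', List.sum_cons, add_comm]; simpa

theorem List.sum_map_add_one (l : List ℤ) : (l.map (· + 1)).sum = l.sum + l.length := by
  induction l with
  | nil => simp
  | cons x l ih => simp only [List.map_cons, List.sum_cons, ih, List.length_cons]; push_cast; ring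

theorem zeta_append_replicate (q m : ℤ) (d₁ d₂ : List ℤ) :
    zeta q m (d₁ ++ List.replicate d₂.length 0) (List.replicate d₁.length 0 ++ d₂) d₁.length
      = q * (d₁.map (· + 1)).sum + (d₂.map (· + 1)).sum * m + q * m := by
  set A := d₁ ++ List.replicate d₂.length (0 : ℤ)
  set B := List.replicate d₁.length (0 : ℤ) ++ d₂
  have hA_left : ∀ j < d₁.length, A.getD j 0 = d₁.getD j 0 := fun j hj =>
    List.getD_append _ _ _ _ hj
  have hA_right : ∀ j, d₁.length ≤ j → A.getD j 0 = 0 := fun j hj => by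
    rw [List.getD_append_right _ _ _ _ hj]; simp
  have hB_left : ∀ j < d₁.length, B.getD j 0 = 0 := fun j hj => by
    rw [List.getD_append _ _ _ _ (by simpa using hj)]; simp
  have hB_take : ∀ j ≤ d₁.length, (B.take j).sum = 0 := fun j hj => by
    rw [List.take_append_of_le_length (by simpa using hj), List.take_replicate,
      List.sum_replicate, smul_zero]
  have h₁ : ∑ j ∈ Finset.range A.length, (q + (B.take j).sum) * A.getD j 0 = q * d₁.sum := by
    rw [show A.length = d₁.length + d₂.length by simp [A], Finset.sum_range_add,
      Finset.sum_eq_zero (s := Finset.range d₂.length) fun j _ => by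
        rw [hA_right _ (by omega), mul_zero], add_zero, ← List.sum_range_length_getD,
      Finset.mul_sum]
    exact Finset.sum_congr rfl fun j hj => by
      rw [hB_take j (by simp at hj; omega), add_zero, hA_left j (by simpa using hj)]
  have h₃ : ∑ j ∈ Finset.range A.length,
      (if d₁.length ≤ j then ((j : ℤ) + 1 - d₁.length) * A.getD j 0 else 0) = 0 :=
    Finset.sum_eq_zero fun j _ => by
      split_ifs with h
      · rw [hA_right j h, mul_zero]
      · rfl
  have h₆ : ∑ j ∈ Finset.range A.length,
      (if j + 1 < d₁.length then ((d₁.length : ℤ) - (j + 1)) * B.getD j 0 else 0) = 0 :=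
    Finset.sum_eq_zero fun j _ => by
      split_ifs with h
      · rw [hB_left j (by omega), mul_zero]
      · rfl
  simp only [zeta]
  rw [h₁, h₃, h₆, List.sum_map_add_one, List.sum_map_add_one]
  simp only [A, B, List.length_append, List.length_replicate, List.sum_append, List.sum_replicate,
    smul_zero, zero_add]
  push_cast
  ring

section BarDiagonal

variable {k deg e mul diag} {M : Type*} [AddCommMonoid M] [Module k M]

theorem diag_apply_unit_unit
    (hcounitl : ∀ s, ((diag s).sum fun p c =>
        if p.1 = e then single p.2 c else 0) = single s 1) (s : S) :
    diag s (e, e) = single s 1 e := by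
  rw [← hcounitl s, Finsupp.sum_apply, ← sum_ite_self_eq' (diag s) (e, e)]
  refine Finsupp.sum_congr fun p _ => ?_
  by_cases h₁ : p.1 = e <;> by_cases h₂ : p.2 = e <;> simp [Prod.ext_iff, h₁, h₂]

theorem IsPrimitive.apply_unit_eq_zero
    (hcounitl : ∀ s, ((diag s).sum fun p c =>
        if p.1 = e then single p.2 c else 0) = single s 1)
    {x : S →₀ k} (hx : IsPrimitive k e diag x) : x e = 0 := by
  have h := congrArg (· (e, e)) ((isPrimitive_iff e diag x).1 hx)
  simp only [linearCombination_apply, Finsupp.sum_apply, Finsupp.smul_apply,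
    diag_apply_unit_unit hcounitl, Finsupp.add_apply] at h
  rw [mapDomain_apply (Prod.mk_left_injective e), mapDomain_apply (Prod.mk_right_injective e)] at h
  simp only [smul_eq_mul, single_apply, mul_ite, mul_one, mul_zero, sum_ite_self_eq'] at h
  exact left_eq_add.mp h
theorem toBarL_cons_of_ne {s : S} (h : s ≠ e) (l : List S) :
    toBarL e (s :: l) = ⟨s, h⟩ :: toBarL e l := by
  simp [toBarL, h]

theorem length_toBarL {l : List S} (h : ∀ s ∈ l, s ≠ e) : (toBarL e l).length = l.length := by
  rw [toBarL, List.length_filterMap_eq_countP, List.countP_eq_length]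
  simpa using h

theorem linearCombination_jMap {ps : List (S →₀ k)} (hps : ∀ p ∈ ps, p e = 0) (a b : S)
    (Φ : BarGen e → M) :
    linearCombination k Φ (jMap k e a ps b) =
      linearCombination k (fun l => Φ (a, toBarL e l, b)) (expandL k ps) := by
  have hjMap : jMap k e a ps b = linearCombination k (fun l =>
      if ∀ s ∈ l, s ≠ e then single (a, toBarL e l, b) 1 else 0) (expandL k ps) := by
    rw [jMap, linearCombination_apply]
    simp only [smul_ite, smul_zero]
  rw [hjMap, linearCombination_linearCombination]
  refine linearCombination_expandL_congr fun l hl => ?_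
  rw [if_pos (forall_ne_of_forall₂_mem_support hps hl), linearCombination_single, one_smul]

theorem pairBar_jMap {ps ps' : List (S →₀ k)} (hps : ∀ p ∈ ps, p e = 0)
    (hps' : ∀ p ∈ ps', p e = 0) (a b a' b' : S) :
    pairBar k e (jMap k e a ps b) (jMap k e a' ps' b') =
      linearCombination k (fun l => linearCombination k (fun l' =>
        single ((a, toBarL e l, b), (a', toBarL e l', b')) 1) (expandL k ps')) (expandL k ps) := by
  have hpairBar : ∀ f g : BarGen e →₀ k, pairBar k e f g =
      linearCombination k (fun u => linearCombination k (fun v => single (u, v) 1) g) f := by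
    intro f g
    simp only [pairBar, linearCombination_apply, Finsupp.smul_sum, smul_smul]
  simp only [hpairBar, linearCombination_jMap hps, linearCombination_jMap hps']

variable (k deg e mul) in
noncomputable def diagBarTerm (pa pb : S × S) (cl : List (S × S)) (i : ℕ) :
    (BarGen e × BarGen e) →₀ k :=
  if (∀ s ∈ (cl.take i).map Prod.fst, s ≠ e) ∧ (∀ s ∈ (cl.drop i).map Prod.snd, s ≠ e) then
    ((sgn (zeta (deg pa.2) (deg pb.1) (cl.map fun p => deg p.1) (cl.map fun p => deg p.2) i) :
      ℤ) : k) •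
      linearCombination k (fun sL => linearCombination k (fun sR =>
          single ((pa.1, toBarL e ((cl.take i).map Prod.fst), sL),
            (sR, toBarL e ((cl.drop i).map Prod.snd), pb.2)) 1)
        (mulK k mul (single pa.2 1) (listProdK k e mul ((cl.take i).map Prod.snd))))
        (mulK k mul (listProdK k e mul ((cl.drop i).map Prod.fst)) (single pb.1 1))
  else 0

theorem diagBar_eq (a : S) (L : List (SBar e)) (b : S) :
    diagBar k deg e mul diag (a, L, b) =
      linearCombination k (fun pa => linearCombination k (fun pb =>
        linearCombination k (fun cl => ∑ i ∈ Finset.range (L.length + 1),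
          diagBarTerm k deg e mul pa pb cl i) (chooseAll k e diag L)) (diag b)) (diag a) := by
  simp only [diagBar, diagBarTerm, linearCombination_apply, Finsupp.smul_sum, Finset.smul_sum,
    smul_ite, smul_zero, smul_smul]
  refine Finsupp.sum_congr fun pa _ => Finsupp.sum_congr fun pb _ =>
    Finsupp.sum_congr fun cl _ => Finset.sum_congr rfl fun i _ => ?_
  split_ifs
  · refine Finsupp.sum_congr fun sL _ => Finsupp.sum_congr fun sR _ => ?_
    congr 1
    ring
  · rfl

theorem diagTens_eq (a : S) (qs : List (ℤ × (S →₀ k))) (b : S) :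
    diagTens k deg e diag a qs b =
      linearCombination k (fun pa => linearCombination k (fun pb =>
        ∑ i ∈ Finset.range (qs.length + 1),
          ((sgn (deg pa.2 * ((qs.take i).map fun p => p.1 + 1).sum
              + ((qs.drop i).map fun p => p.1 + 1).sum * deg pb.1 + deg pa.2 * deg pb.1) : ℤ) : k) •
            pairBar k e (jMap k e pa.1 ((qs.take i).map Prod.snd) pb.1)
              (jMap k e pa.2 ((qs.drop i).map Prod.snd) pb.2)) (diag b)) (diag a) := by
  simp only [diagTens, linearCombination_apply, Finsupp.smul_sum, Finset.smul_sum, smul_smul]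
  refine Finsupp.sum_congr fun pa _ => Finsupp.sum_congr fun pb _ =>
    Finset.sum_congr rfl fun i _ => ?_
  rw [mul_comm, mul_assoc]

theorem linearCombination_expandL_chooseAll_cons {p : S →₀ k} (hp : p e = 0)
    (ps : List (S →₀ k)) (Ψ : List (S × S) → M) :
    linearCombination k (fun l => linearCombination k Ψ (chooseAll k e diag (toBarL e l)))
        (expandL k (p :: ps)) =
      linearCombination k (fun pr => linearCombination k (fun l =>
        linearCombination k (fun cl => Ψ (pr :: cl)) (chooseAll k e diag (toBarL e l)))
          (expandL k ps)) (linearCombination k diag p) := by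
  rw [linearCombination_expandL_cons, linearCombination_linearCombination]
  refine linearCombination_congr_of_mem_support fun s hs => ?_
  have hse : s ≠ e := fun h => mem_support_iff.mp hs (h ▸ hp)
  simp only [toBarL_cons_of_ne hse, linearCombination_chooseAll_cons]
  exact linearCombination_comm _ _ _

theorem linearCombination_chooseAll_of_isPrimitive
    (hcounitl : ∀ s, ((diag s).sum fun p c =>
        if p.1 = e then single p.2 c else 0) = single s 1)
    {ps : List (S →₀ k)} (hps : ∀ p ∈ ps, IsPrimitive k e diag p) (i : ℕ)
    (Ψ : List (S × S) → M)
    (hΨ : ∀ cl, ¬((∀ s ∈ (cl.take i).map Prod.fst, s ≠ e) ∧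
      (∀ s ∈ (cl.drop i).map Prod.snd, s ≠ e)) → Ψ cl = 0) :
    linearCombination k (fun l => linearCombination k Ψ (chooseAll k e diag (toBarL e l)))
        (expandL k ps) =
      linearCombination k (fun l₁ => linearCombination k (fun l₂ =>
        Ψ (l₁.map (·, e) ++ l₂.map (e, ·))) (expandL k (ps.drop i))) (expandL k (ps.take i)) := by
  induction ps generalizing i Ψ with
  | nil =>
    simp only [List.take_nil, List.drop_nil, linearCombination_expandL_nil]
    exact linearCombination_chooseAll_nil e diag Ψ
  | cons p ps ih =>
    simp only [List.forall_mem_cons] at hps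
    rw [linearCombination_expandL_chooseAll_cons (hps.1.apply_unit_eq_zero hcounitl),
      (isPrimitive_iff e diag p).1 hps.1, map_add, linearCombination_mapDomain,
      linearCombination_mapDomain]
    -- At cut `0` the factors `s ⊗ 1` die (unit right leg after the cut); at a positive cut the
    -- factors `1 ⊗ s` die (unit left leg before it).
    cases i with
    | zero =>
      refine (congrArg₂ (· + ·) (linearCombination_eq_zero_of_forall fun s =>
        linearCombination_eq_zero_of_forall fun l => linearCombination_eq_zero_of_forall fun cl =>
          hΨ _ (by simp)) ?_).trans (zero_add _)
      rw [List.take_zero, List.drop_zero, linearCombination_expandL_nil,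
        linearCombination_expandL_cons]
      refine congrArg (linearCombination k · p) (funext fun t => ?_)
      rw [Function.comp_apply, ih hps.2 0 _ fun cl hcl => hΨ _ fun h => hcl ?_]
      · simp [linearCombination_expandL_nil]
      · simp only [List.take_zero, List.map_nil, List.drop_zero] at h ⊢
        exact ⟨List.forall_mem_nil _, fun s hs => h.2 s (List.mem_cons_of_mem _ hs)⟩
    | succ i =>
      refine (congrArg₂ (· + ·) ?_ (linearCombination_eq_zero_of_forall fun t =>
        linearCombination_eq_zero_of_forall fun l => linearCombination_eq_zero_of_forall fun cl =>
          hΨ _ (by simp))).trans (add_zero _)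
      rw [List.take_succ_cons, List.drop_succ_cons, linearCombination_expandL_cons]
      refine congrArg (linearCombination k · p) (funext fun s => ?_)
      rw [Function.comp_apply, ih hps.2 i _ fun cl hcl => hΨ _ fun h => hcl ?_]
      · simp
      · simp only [List.take_succ_cons, List.drop_succ_cons, List.map_cons,
          List.forall_mem_cons] at h
        exact ⟨h.1.2, h.2⟩

theorem linearCombination_diagBar_jMap {ps : List (S →₀ k)} (hps : ∀ p ∈ ps, p e = 0)
    (a b : S) :
    linearCombination k (diagBar k deg e mul diag) (jMap k e a ps b) =
      linearCombination k (fun pa => linearCombination k (fun pb =>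
        ∑ i ∈ Finset.range (ps.length + 1),
          linearCombination k (fun l => linearCombination k (fun cl =>
            diagBarTerm k deg e mul pa pb cl i) (chooseAll k e diag (toBarL e l))) (expandL k ps))
        (diag b)) (diag a) := by
  rw [linearCombination_jMap hps]
  trans linearCombination k (fun l => linearCombination k (fun pa => linearCombination k (fun pb =>
    linearCombination k (fun cl => ∑ i ∈ Finset.range (ps.length + 1),
      diagBarTerm k deg e mul pa pb cl i) (chooseAll k e diag (toBarL e l)))
        (diag b)) (diag a)) (expandL k ps)
  · refine linearCombination_expandL_congr fun l hl => ?_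
    rw [diagBar_eq, length_toBarL (forall_ne_of_forall₂_mem_support hps hl), hl.length_eq]
  · rw [linearCombination_comm]
    refine congrArg (linearCombination k · (diag a)) (funext fun pa => ?_)
    rw [linearCombination_comm]
    simp only [linearCombination_finset_sum]

theorem diagBarTerm_split (hdege : deg e = 0) (hunitl : ∀ s, mul e s = single s 1)
    (hunitr : ∀ s, mul s e = single s 1) (pa pb : S × S) {l₁ l₂ : List S}
    (h₁ : ∀ s ∈ l₁, s ≠ e) (h₂ : ∀ s ∈ l₂, s ≠ e) :
    diagBarTerm k deg e mul pa pb (l₁.map (·, e) ++ l₂.map (e, ·)) l₁.length =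
      ((sgn (deg pa.2 * ((l₁.map deg).map (· + 1)).sum
          + ((l₂.map deg).map (· + 1)).sum * deg pb.1 + deg pa.2 * deg pb.1) : ℤ) : k) •
        single ((pa.1, toBarL e l₁, pb.1), (pa.2, toBarL e l₂, pb.2)) 1 := by
  have htake : (l₁.map (·, e) ++ l₂.map (e, ·)).take l₁.length = l₁.map (·, e) :=
    List.take_left' (List.length_map _)
  have hdrop : (l₁.map (·, e) ++ l₂.map (e, ·)).drop l₁.length = l₂.map (e, ·) :=
    List.drop_left' (List.length_map _)
  have hfst : (l₁.map (·, e) ++ l₂.map (e, ·)).map (fun p => deg p.1) =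
      l₁.map deg ++ List.replicate l₂.length 0 := by
    simp [Function.comp_def, hdege, List.map_const']
  have hsnd : (l₁.map (·, e) ++ l₂.map (e, ·)).map (fun p => deg p.2) =
      List.replicate l₁.length 0 ++ l₂.map deg := by
    simp [Function.comp_def, hdege, List.map_const']
  have hzeta := zeta_append_replicate (deg pa.2) (deg pb.1) (l₁.map deg) (l₂.map deg)
  simp only [List.length_map] at hzeta
  rw [diagBarTerm, htake, hdrop, hfst, hsnd, hzeta]
  simp only [List.map_map, Function.comp_def, List.map_id', List.map_const',
    listProdK_replicate e mul hunitl, mulK_single_single, hunitl, hunitr]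
  rw [if_pos ⟨h₁, h₂⟩]
  simp only [linearCombination_single, one_smul]

theorem linearCombination_diagBarTerm_split (hdege : deg e = 0)
    (hunitl : ∀ s, mul e s = single s 1) (hunitr : ∀ s, mul s e = single s 1)
    {qs : List (ℤ × (S →₀ k))} (hqs_unit : ∀ q ∈ qs, q.2 e = 0)
    (hqs_deg : ∀ q ∈ qs, IsHomog k deg q.1 q.2) (pa pb : S × S) {i : ℕ} (hi : i ≤ qs.length) :
    linearCombination k (fun l₁ => linearCombination k (fun l₂ =>
        diagBarTerm k deg e mul pa pb (l₁.map (·, e) ++ l₂.map (e, ·)) i)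
          (expandL k ((qs.drop i).map Prod.snd))) (expandL k ((qs.take i).map Prod.snd)) =
      ((sgn (deg pa.2 * ((qs.take i).map fun p => p.1 + 1).sum
          + ((qs.drop i).map fun p => p.1 + 1).sum * deg pb.1 + deg pa.2 * deg pb.1) : ℤ) : k) •
        pairBar k e (jMap k e pa.1 ((qs.take i).map Prod.snd) pb.1)
          (jMap k e pa.2 ((qs.drop i).map Prod.snd) pb.2) := by
  have htake_unit : ∀ p ∈ (qs.take i).map Prod.snd, p e = 0 :=
    List.forall_mem_map.2 fun q hq => hqs_unit q (List.mem_of_mem_take hq)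
  have hdrop_unit : ∀ p ∈ (qs.drop i).map Prod.snd, p e = 0 :=
    List.forall_mem_map.2 fun q hq => hqs_unit q (List.mem_of_mem_drop hq)
  rw [pairBar_jMap htake_unit hdrop_unit, ← linearCombination_smul_left]
  refine linearCombination_expandL_congr fun l₁ hl₁ => ?_
  rw [← linearCombination_smul_left]
  refine linearCombination_expandL_congr fun l₂ hl₂ => ?_
  have hlen : l₁.length = i := by
    rw [← hl₁.length_eq, List.length_map, List.length_take, min_eq_left hi]
  rw [← hlen, diagBarTerm_split hdege hunitl hunitr pa pb
      (forall_ne_of_forall₂_mem_support htake_unit hl₁)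
      (forall_ne_of_forall₂_mem_support hdrop_unit hl₂),
    map_deg_eq_of_forall₂_mem_support deg
      (fun q hq => hqs_deg q (List.mem_of_mem_take hq)) hl₁,
    map_deg_eq_of_forall₂_mem_support deg
      (fun q hq => hqs_deg q (List.mem_of_mem_drop hq)) hl₂, hlen]
  simp only [List.map_map, Function.comp_def]

end BarDiagonal

theorem bar_diagonal_on_primitives
    -- grading of the structure constants
    (hdege : deg e = 0)
    -- `e` is the unit and `ε` the counit
    (hunitl : ∀ s, mul e s = Finsupp.single s 1)
    (hunitr : ∀ s, mul s e = Finsupp.single s 1)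
    (hcounitl : ∀ s, ((diag s).sum fun p c =>
        if p.1 = e then Finsupp.single p.2 c else 0) = Finsupp.single s 1) :
    -- on `K ⊗ TC(sP) ⊗ K` (middle slots homogeneous primitive elements), the
    -- Alexander–Whitney diagonal of the bar resolution agrees with the
    -- tensorized diagonal: the canonical map is a morphism of graded
    -- coalgebras
    ∀ (a b : S) (ps : List (ℤ × (S →₀ k))),
      (∀ p ∈ ps, IsPrimitive k e diag p.2 ∧ IsHomog k deg p.1 p.2) →
      ((jMap k e a (ps.map Prod.snd) b).sum fun g c =>
          c • diagBar k deg e mul diag g)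
        = diagTens k deg e diag a ps b := by
  intro a b ps hps
  have hprim : ∀ p ∈ ps.map Prod.snd, IsPrimitive k e diag p :=
    List.forall_mem_map.2 fun q hq => (hps q hq).1
  have hunit : ∀ q ∈ ps, q.2 e = 0 := fun q hq => (hps q hq).1.apply_unit_eq_zero hcounitl
  rw [← linearCombination_apply, linearCombination_diagBar_jMap (List.forall_mem_map.2 hunit),
    diagTens_eq]
  refine congrArg (linearCombination k · (diag a)) (funext fun pa =>
    congrArg (linearCombination k · (diag b)) (funext fun pb =>
      Finset.sum_congr (by rw [List.length_map]) fun i hi => ?_))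
  rw [linearCombination_chooseAll_of_isPrimitive hcounitl hprim i _
    fun cl hcl => by rw [diagBarTerm, if_neg hcl], ← List.map_take, ← List.map_drop]
  exact linearCombination_diagBarTerm_split hdege hunitl hunitr hunit
    (fun q hq => (hps q hq).2) pa pb (Nat.lt_succ_iff.mp (Finset.mem_range.mp hi))
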